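/- Let p, q be coprime. The set of differences D = {x − y : x a p-th root of unity, y a q-th root of unity} has exactly pq elements, and the map (x,y) ↦ x − y is injective on the product of the two root-of-unity sets. -/

import Mathlib

/-!
Roots of unity lie on the unit circle, where conjugation is inversion. Conjugating
`x₁ + y₂ = x₂ + y₁` shows that, unless this common sum vanishes, `{x₁, y₂}` and `{x₂, y₁}`
have the same product as well, hence are equal; and a common `p`-th and `q`-th root of unity
is `1`. A vanishing sum forces `x₁ = -y₂` and `x₂ = -y₁`; then `x₁ ^ 2 = x₂ ^ 2 = 1` since
`gcd p (2 * q) ∣ 2`, and `x₂ = -x₁` would again make `{x₁, y₂} = {x₂, y₁}`.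
-/

open Polynomial

namespace Complex

theorem eq_or_eq_of_add_eq_add_of_norm_eq_one {u v w z : ℂ} (hu : ‖u‖ = 1) (hv : ‖v‖ = 1)
    (hw : ‖w‖ = 1) (hz : ‖z‖ = 1) (h : u + v = w + z) : u + v = 0 ∨ u = w ∨ u = z := by
  have ne_zero {a : ℂ} (ha : ‖a‖ = 1) : a ≠ 0 := norm_ne_zero_iff.mp (ha ▸ one_ne_zero)
  have h_inv : u⁻¹ + v⁻¹ = w⁻¹ + z⁻¹ := by
    simpa only [map_add, ← inv_eq_conj, hu, hv, hw, hz] using congrArg (starRingEnd ℂ) h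
  by_cases hs : u + v = 0
  · exact Or.inl hs
  have h_mul : u * v = w * z := by
    rw [inv_add_inv (ne_zero hu) (ne_zero hv), inv_add_inv (ne_zero hw) (ne_zero hz), ← h]
      at h_inv
    exact inv_injective (mul_left_cancel₀ hs (by simpa only [div_eq_mul_inv] using h_inv))
  have : (u - w) * (u - z) = 0 := by linear_combination u * h - h_mul
  exact Or.inr (by simpa only [mul_eq_zero, sub_eq_zero] using this)

theorem ncard_setOf_pow_eq_one {n : ℕ} (hn : n ≠ 0) : {x : ℂ | x ^ n = 1}.ncard = n := by
  have : {x : ℂ | x ^ n = 1} = nthRootsFinset n (1 : ℂ) := by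
    ext x
    simp [mem_nthRootsFinset (Nat.pos_of_ne_zero hn)]
  rw [this, Set.ncard_coe_finset, (isPrimitiveRoot_exp n hn).card_nthRootsFinset]

end Complex

section RootsOfUnity

variable {p q : ℕ}

theorem eq_one_of_pow_eq_one_of_coprime (hpq : p.Coprime q) {x : ℂ} (hp : x ^ p = 1)
    (hq : x ^ q = 1) : x = 1 := by
  simpa only [hpq.gcd_eq_one, pow_one] using pow_gcd_eq_one.mpr ⟨hp, hq⟩

theorem sq_eq_one_of_pow_eq_one_of_neg_pow_eq_one (hpq : p.Coprime q) {x : ℂ} (hp : x ^ p = 1)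
    (hq : (-x) ^ q = 1) : x ^ 2 = 1 := by
  have h2q : x ^ (2 * q) = 1 := by
    rw [← (even_two_mul q).neg_pow, pow_mul', hq, one_pow]
  have hgcd : p.gcd (2 * q) ∣ 2 := by
    rw [hpq.symm.gcd_mul_right_cancel_right]
    exact Nat.gcd_dvd_right p 2
  obtain ⟨k, hk⟩ := hgcd
  rw [hk, pow_mul, pow_gcd_eq_one.mpr ⟨hp, h2q⟩, one_pow]

theorem eq_and_eq_of_sub_eq_sub_of_pow_eq_one (hp : p ≠ 0) (hq : q ≠ 0) (hpq : p.Coprime q)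
    {x₁ x₂ y₁ y₂ : ℂ} (hx₁ : x₁ ^ p = 1) (hx₂ : x₂ ^ p = 1) (hy₁ : y₁ ^ q = 1)
    (hy₂ : y₂ ^ q = 1) (h : x₁ - y₁ = x₂ - y₂) : x₁ = x₂ ∧ y₁ = y₂ := by
  have norm_x {x : ℂ} (hx : x ^ p = 1) : ‖x‖ = 1 := Complex.norm_eq_one_of_pow_eq_one hx hp
  have norm_y {y : ℂ} (hy : y ^ q = 1) : ‖y‖ = 1 := Complex.norm_eq_one_of_pow_eq_one hy hq
  have h_or : x₁ = x₂ ∨ x₁ = y₁ := by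
    rcases Complex.eq_or_eq_of_add_eq_add_of_norm_eq_one (norm_x hx₁) (norm_y hy₂) (norm_x hx₂)
      (norm_y hy₁) (by linear_combination h) with hs | h' | h'
    · have hy₂_eq : y₂ = -x₁ := by linear_combination hs
      have hy₁_eq : y₁ = -x₂ := by linear_combination hs - h
      have hx₁_sq := sq_eq_one_of_pow_eq_one_of_neg_pow_eq_one hpq hx₁ (hy₂_eq ▸ hy₂)
      have hx₂_sq := sq_eq_one_of_pow_eq_one_of_neg_pow_eq_one hpq hx₂ (hy₁_eq ▸ hy₁)
      have : (x₁ - x₂) * (x₁ + x₂) = 0 := by linear_combination hx₁_sq - hx₂_sq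
      rcases mul_eq_zero.mp this with h'' | h''
      · exact Or.inl (by linear_combination h'')
      · exact Or.inr (by linear_combination h'' - hy₁_eq)
    · exact Or.inl h'
    · exact Or.inr h'
  rcases h_or with hx | hxy
  · exact ⟨hx, by linear_combination hx - h⟩
  · have hx₁_one : x₁ = 1 := eq_one_of_pow_eq_one_of_coprime hpq hx₁ (hxy ▸ hy₁)
    have hxy₂ : x₂ = y₂ := by linear_combination hxy - h
    have hx₂_one : x₂ = 1 := eq_one_of_pow_eq_one_of_coprime hpq hx₂ (hxy₂ ▸ hy₂)
    exact ⟨hx₁_one.trans hx₂_one.symm, by rw [← hxy, ← hxy₂, hx₁_one, hx₂_one]⟩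

end RootsOfUnity

theorem psk_difference_set_card (p q : ℕ) (hp : 0 < p) (hq : 0 < q)
    (hpq : Nat.Coprime p q) :
    Set.InjOn (fun zp : ℂ × ℂ => zp.1 - zp.2)
      (({x : ℂ | x ^ p = 1} : Set ℂ) ×ˢ ({y : ℂ | y ^ q = 1} : Set ℂ)) ∧
    ({w : ℂ | ∃ x y : ℂ, x ^ p = 1 ∧ y ^ q = 1 ∧ w = x - y}).ncard = p * q := by
  have h_inj : Set.InjOn (fun zp : ℂ × ℂ => zp.1 - zp.2)
      (({x : ℂ | x ^ p = 1} : Set ℂ) ×ˢ ({y : ℂ | y ^ q = 1} : Set ℂ)) := by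
    rintro ⟨x₁, y₁⟩ ⟨hx₁, hy₁⟩ ⟨x₂, y₂⟩ ⟨hx₂, hy₂⟩ h
    obtain ⟨hx, hy⟩ := eq_and_eq_of_sub_eq_sub_of_pow_eq_one hp.ne' hq.ne' hpq hx₁ hx₂ hy₁ hy₂ h
    exact Prod.ext hx hy
  refine ⟨h_inj, ?_⟩
  have h_image : {w : ℂ | ∃ x y : ℂ, x ^ p = 1 ∧ y ^ q = 1 ∧ w = x - y} =
      (fun zp : ℂ × ℂ => zp.1 - zp.2) '' ({x : ℂ | x ^ p = 1} ×ˢ {y : ℂ | y ^ q = 1}) := by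
    ext w
    simp [Set.mem_sub, eq_comm]
  rw [h_image, h_inj.ncard_image, Set.ncard_prod, Complex.ncard_setOf_pow_eq_one hp.ne',
    Complex.ncard_setOf_pow_eq_one hq.ne']
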